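/- arXiv:1907.05083 — 4 statements merged into one kernel-verified Lean document; each statement's English description precedes it below -/
import Mathlib

section
/- Let G be a simple graph on a finite vertex set V with |V| = n, and let p be a walk from a to b with p.length = dist_G(a, b) (a shortest path) having k vertices (so p.length = k − 1). Then the sum of the degrees of the vertices of p satisfies ∑_{i=0}^{k−1} deg_G(p.getVert i) + k ≤ 3n. -/
/-- Along any walk, the extended distance between the `i`-th and `j`-th vertices is
at most `j - i`. -/
private lemma edist_getVert_le {V : Type*} {G : SimpleGraph V} {a b : V}
    (p : G.Walk a b) : ∀ i j : ℕ, i ≤ j →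
    G.edist (p.getVert i) (p.getVert j) ≤ (j - i : ℕ) := by
  induction p with
  | nil => intro i j _; simp [SimpleGraph.Walk.getVert]
  | @cons u v w h q ih =>
    intro i j hij
    match i, j with
    | 0, 0 => simp
    | 0, (j+1) =>
      have h1 : G.edist u (q.getVert 0) ≤ 1 := by
        rw [q.getVert_zero]
        exact le_of_eq (SimpleGraph.edist_eq_one_iff_adj.mpr h)
      calc G.edist ((q.cons h).getVert 0) ((q.cons h).getVert (j+1))
          = G.edist u (q.getVert j) := by
            rw [SimpleGraph.Walk.getVert_zero, SimpleGraph.Walk.getVert_cons_succ]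
        _ ≤ G.edist u (q.getVert 0) + G.edist (q.getVert 0) (q.getVert j) :=
            SimpleGraph.edist_triangle
        _ ≤ 1 + (j - 0 : ℕ) := add_le_add h1 (ih 0 j (Nat.zero_le _))
        _ ≤ ((j + 1 - 0 : ℕ) : ℕ∞) := by
            simp only [Nat.sub_zero]
            rw [← Nat.cast_one, ← Nat.cast_add, Nat.cast_le]
            omega
    | (i+1), (j+1) =>
      calc G.edist ((q.cons h).getVert (i+1)) ((q.cons h).getVert (j+1))
          = G.edist (q.getVert i) (q.getVert j) := by
            rw [SimpleGraph.Walk.getVert_cons_succ, SimpleGraph.Walk.getVert_cons_succ]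
        _ ≤ ((j - i : ℕ) : ℕ∞) := ih i j (by omega)
        _ = ((j + 1 - (i + 1) : ℕ) : ℕ∞) := by congr 1; omega

/-- For a shortest walk (geodesic) `p` with `k` vertices in a graph on `n` vertices,
the sum of the degrees of the vertices of `p` plus `k` is at most `3n`. -/
theorem geodesic_degree_sum_le
    {V : Type*} [Fintype V] (G : SimpleGraph V) [DecidableRel G.Adj]
    {a b : V} (p : G.Walk a b) (hp : p.length = G.dist a b)
    (k : ℕ) (hk : k = p.length + 1) :
    (∑ i ∈ Finset.range k, G.degree (p.getVert i)) + k ≤ 3 * Fintype.card V := by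
  classical
  set u : ℕ → V := fun i => p.getVert i with hu
  -- the edist between a and b equals the length of p
  have hreach : G.Reachable a b := ⟨p⟩
  have hne : G.edist a b ≠ ⊤ := SimpleGraph.edist_ne_top_iff_reachable.mpr hreach
  have hlen : G.edist a b = (p.length : ℕ∞) := by
    have h1 : (G.edist a b).toNat = G.dist a b := rfl
    have h2 : G.edist a b = ((G.edist a b).toNat : ℕ∞) := (ENat.coe_toNat hne).symm
    rw [h2, h1, ← hp]
  -- lower bound on distances along the geodesic
  have key : ∀ i j : ℕ, i ≤ j → j ≤ p.length →
      ((j - i : ℕ) : ℕ∞) ≤ G.edist (u i) (u j) := by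
    intro i j hij hj
    have e_le : G.edist (u i) (u j) ≤ ((j - i : ℕ) : ℕ∞) := edist_getVert_le p i j hij
    have e_ne : G.edist (u i) (u j) ≠ ⊤ := fun h => by
      rw [h] at e_le; exact (ENat.coe_ne_top _) (top_le_iff.mp e_le)
    obtain ⟨m, hm⟩ : ∃ m : ℕ, G.edist (u i) (u j) = (m : ℕ∞) :=
      ⟨(G.edist (u i) (u j)).toNat, (ENat.coe_toNat e_ne).symm⟩
    have h1 : G.edist a (u i) ≤ (i : ℕ∞) := by
      have := edist_getVert_le p 0 i (Nat.zero_le _)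
      simpa [hu, p.getVert_zero] using this
    have h2 : G.edist (u j) b ≤ ((p.length - j : ℕ) : ℕ∞) := by
      have := edist_getVert_le p j p.length hj
      simpa [hu, p.getVert_length] using this
    have htri : G.edist a b ≤ G.edist a (u i) + G.edist (u i) (u j) + G.edist (u j) b :=
      le_trans SimpleGraph.edist_triangle
        (add_le_add SimpleGraph.edist_triangle le_rfl)
    have hsum : (p.length : ℕ∞) ≤ ((i + m + (p.length - j) : ℕ) : ℕ∞) := by
      rw [← hlen]
      push_cast
      exact le_trans htri (add_le_add (add_le_add h1 hm.le) h2)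
    rw [Nat.cast_le] at hsum
    rw [hm, Nat.cast_le]
    omega
  -- closed neighborhoods
  set N : ℕ → Finset V := fun i => insert (u i) (G.neighborFinset (u i)) with hN
  have hNcard : ∀ i, (N i).card = G.degree (u i) + 1 := by
    intro i
    rw [hN]
    simp only
    rw [Finset.card_insert_of_notMem (G.notMem_neighborFinset_self (u i)),
      G.card_neighborFinset_eq_degree]
  have hNmem : ∀ i x, x ∈ N i → G.edist (u i) x ≤ 1 := by
    intro i x hx
    rcases Finset.mem_insert.mp hx with h | h
    · simp [h.symm]
    · exact le_of_eq (SimpleGraph.edist_eq_one_iff_adj.mpr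
        ((G.mem_neighborFinset (u i) x).mp h))
  -- disjointness of closed neighborhoods for far-apart indices
  have hdisj : ∀ i j : ℕ, i < j → j ≤ p.length → 3 ≤ j - i → Disjoint (N i) (N j) := by
    intro i j hij hj h3
    rw [Finset.disjoint_left]
    intro x hxi hxj
    have h1 : G.edist (u i) x ≤ 1 := hNmem i x hxi
    have h2 : G.edist x (u j) ≤ 1 := SimpleGraph.edist_comm ▸ hNmem j x hxj
    have hle : G.edist (u i) (u j) ≤ 2 := by
      calc G.edist (u i) (u j) ≤ G.edist (u i) x + G.edist x (u j) :=
            SimpleGraph.edist_triangle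
        _ ≤ 1 + 1 := add_le_add h1 h2
        _ = 2 := one_add_one_eq_two
    have hge : ((j - i : ℕ) : ℕ∞) ≤ G.edist (u i) (u j) := key i j hij.le hj
    have : ((j - i : ℕ) : ℕ∞) ≤ 2 := le_trans hge hle
    have h2' : ((j - i : ℕ) : ℕ∞) ≤ ((2 : ℕ) : ℕ∞) := by simpa using this
    rw [Nat.cast_le] at h2'
    omega
  -- per-residue-class bound
  have hclass : ∀ r : ℕ, ∑ i ∈ (Finset.range k).filter (fun i => i % 3 = r),
      (G.degree (u i) + 1) ≤ Fintype.card V := by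
    intro r
    set S := (Finset.range k).filter (fun i => i % 3 = r) with hS
    have hdisjS : ∀ i ∈ S, ∀ j ∈ S, i ≠ j → Disjoint (N i) (N j) := by
      intro i hi j hj hij
      have hi' : i < k ∧ i % 3 = r := by
        simpa [hS, Finset.mem_filter, Finset.mem_range] using hi
      have hj' : j < k ∧ j % 3 = r := by
        simpa [hS, Finset.mem_filter, Finset.mem_range] using hj
      rcases lt_or_gt_of_ne hij with h | h
      · exact hdisj i j h (by omega) (by omega)
      · exact (hdisj j i h (by omega) (by omega)).symm
    calc ∑ i ∈ S, (G.degree (u i) + 1) = ∑ i ∈ S, (N i).card := by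
          refine Finset.sum_congr rfl fun i _ => (hNcard i).symm
      _ = (S.biUnion N).card := (Finset.card_biUnion hdisjS).symm
      _ ≤ Fintype.card V := by
          rw [← Finset.card_univ]; exact Finset.card_le_univ _
  -- assemble
  have hsplit : ∑ i ∈ Finset.range k, (G.degree (u i) + 1)
      = ∑ r ∈ Finset.range 3, ∑ i ∈ (Finset.range k).filter (fun i => i % 3 = r),
        (G.degree (u i) + 1) := by
    exact (Finset.sum_fiberwise_of_maps_to
      (fun i _ => Finset.mem_range.mpr (Nat.mod_lt _ (by norm_num))) _).symm
  have htotal : ∑ i ∈ Finset.range k, (G.degree (u i) + 1) ≤ 3 * Fintype.card V := by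
    rw [hsplit]
    calc ∑ r ∈ Finset.range 3, ∑ i ∈ (Finset.range k).filter (fun i => i % 3 = r),
          (G.degree (u i) + 1)
        ≤ ∑ _r ∈ Finset.range 3, Fintype.card V :=
          Finset.sum_le_sum fun r _ => hclass r
      _ = 3 * Fintype.card V := by simp [Finset.sum_const, mul_comm]
  have : ∑ i ∈ Finset.range k, (G.degree (u i) + 1)
      = (∑ i ∈ Finset.range k, G.degree (u i)) + k := by
    rw [Finset.sum_add_distrib, Finset.sum_const, Finset.card_range, smul_eq_mul, mul_one]
  rw [← this]
  exact htotal
end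

section
/- Let G be a simple graph on a finite vertex set V with |V| = n, and let p be a walk from a to b with p.length = dist_G(a, b) (a shortest path) having k ≥ 2 vertices u_1, u_2, ..., u_k (so p.length = k − 1). Then ∏_{i=1}^{k−1} (deg_G(u_i) + deg_G(u_{i+1}) + 1) ≤ (6n/k)^k. -/
open Finset SimpleGraph

section Aux

variable {V : Type*} {G : SimpleGraph V} {a b : V}

/-- Between positions `i ≤ j` of a walk there is a walk of length `j - i`. -/
lemma aux_exists_walk_getVert (p : G.Walk a b) {i j : ℕ} (hij : i ≤ j) (hj : j ≤ p.length) :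
    ∃ q : G.Walk (p.getVert i) (p.getVert j), q.length = j - i := by
  induction j, hij using Nat.le_induction with
  | base => exact ⟨SimpleGraph.Walk.nil, by simp⟩
  | succ j hij ih =>
    obtain ⟨q, hq⟩ := ih (by omega)
    exact ⟨q.concat (p.adj_getVert_succ (by omega)), by
      rw [SimpleGraph.Walk.length_concat, hq]; omega⟩

/-- On a geodesic, vertices at positions `i ≤ j` are at distance at least `j - i`. -/
lemma aux_dist_getVert_ge (p : G.Walk a b) (hp : p.length = G.dist a b)
    {i j : ℕ} (hij : i ≤ j) (hj : j ≤ p.length) :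
    j - i ≤ G.dist (p.getVert i) (p.getVert j) := by
  obtain ⟨q, hq⟩ := aux_exists_walk_getVert p hij hj
  obtain ⟨r, hr⟩ := SimpleGraph.Reachable.exists_walk_length_eq_dist ⟨q⟩
  obtain ⟨q1, hq1⟩ := aux_exists_walk_getVert p (Nat.zero_le i) (hij.trans hj)
  obtain ⟨q2, hq2⟩ := aux_exists_walk_getVert p hj (le_refl p.length)
  have hbig : G.dist a b ≤ i + G.dist (p.getVert i) (p.getVert j) + (p.length - j) := by
    have := SimpleGraph.dist_le
      ((((q1.append r).append q2).copy (p.getVert_zero) (p.getVert_length)))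
    simpa [hq1, hq2, hr] using this
  omega

end Aux

/-- For a shortest walk (geodesic) `p` with `k ≥ 2` vertices `u_1, …, u_k`
(so `p.length = k - 1`) in a graph on `n` vertices,
`∏_{i=1}^{k-1} (deg u_i + deg u_{i+1} + 1) ≤ (6n/k)^k`.
Here `u_{i+1} = p.getVert i` for `i = 0, …, k - 1`. -/
theorem geodesic_degree_product_le
    {V : Type*} [Fintype V] (G : SimpleGraph V) [DecidableRel G.Adj]
    {a b : V} (p : G.Walk a b) (hp : p.length = G.dist a b)
    (k : ℕ) (hk : 2 ≤ k) (hlen : k = p.length + 1) :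
    (∏ i ∈ Finset.range (k - 1),
        ((G.degree (p.getVert i) : ℝ) + (G.degree (p.getVert (i + 1)) : ℝ) + 1))
      ≤ (6 * (Fintype.card V : ℝ) / (k : ℝ)) ^ k := by
  classical
  set n := Fintype.card V with hn
  -- closed neighborhoods
  set N : ℕ → Finset V := fun i => insert (p.getVert i) (G.neighborFinset (p.getVert i)) with hN
  have hNcard : ∀ i, (N i).card = G.degree (p.getVert i) + 1 := by
    intro i
    rw [hN]
    rw [Finset.card_insert_of_notMem (by simp), G.card_neighborFinset_eq_degree]
  -- disjointness of closed neighborhoods at distance ≥ 3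
  have hdisj : ∀ i j : ℕ, i ≤ p.length → j ≤ p.length → i + 3 ≤ j → Disjoint (N i) (N j) := by
    intro i j hi hj hij3
    rw [Finset.disjoint_left]
    intro w hwi hwj
    have hge : 3 ≤ G.dist (p.getVert i) (p.getVert j) := by
      have := aux_dist_getVert_ge p hp (by omega : i ≤ j) hj
      omega
    have hle : G.dist (p.getVert i) (p.getVert j) ≤ 2 := by
      simp only [hN, Finset.mem_insert, SimpleGraph.mem_neighborFinset] at hwi hwj
      rcases hwi with h1 | h1 <;> rcases hwj with h2 | h2
      · rw [← h1, ← h2]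
        simp [SimpleGraph.dist_self]
      · rw [h1] at h2
        rw [SimpleGraph.dist_eq_one_iff_adj.mpr h2.symm]
        norm_num
      · rw [h2] at h1
        rw [SimpleGraph.dist_eq_one_iff_adj.mpr h1]
        norm_num
      · have : G.dist (p.getVert i) (p.getVert j) ≤
            (SimpleGraph.Walk.cons h1 (SimpleGraph.Walk.cons h2.symm
              SimpleGraph.Walk.nil)).length := SimpleGraph.dist_le _
        simpa using this
    omega
  -- sum over a residue class
  have hclass : ∀ r : ℕ, ∑ i ∈ (Finset.range k).filter (fun i => i % 3 = r),
      (G.degree (p.getVert i) + 1) ≤ n := by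
    intro r
    have hpd : ∀ i ∈ (Finset.range k).filter (fun i => i % 3 = r),
        ∀ j ∈ (Finset.range k).filter (fun i => i % 3 = r), i ≠ j → Disjoint (N i) (N j) := by
      intro i hi j hj hij
      simp only [Finset.mem_filter, Finset.mem_range] at hi hj
      rcases lt_or_gt_of_ne hij with h | h
      · exact hdisj i j (by omega) (by omega) (by omega)
      · exact (hdisj j i (by omega) (by omega) (by omega)).symm
    calc ∑ i ∈ (Finset.range k).filter (fun i => i % 3 = r), (G.degree (p.getVert i) + 1)
        = ∑ i ∈ (Finset.range k).filter (fun i => i % 3 = r), (N i).card := by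
          exact Finset.sum_congr rfl fun i _ => (hNcard i).symm
      _ = (((Finset.range k).filter (fun i => i % 3 = r)).biUnion N).card :=
          (Finset.card_biUnion hpd).symm
      _ ≤ n := Finset.card_le_univ _
  -- total degree sum bound
  have hdegsum : ∑ i ∈ Finset.range k, (G.degree (p.getVert i) + 1) ≤ 3 * n := by
    have hfib := Finset.sum_fiberwise_of_maps_to
      (fun i (_ : i ∈ Finset.range k) => Finset.mem_range.mpr (Nat.mod_lt i (by norm_num) :
        i % 3 < 3)) (fun i => G.degree (p.getVert i) + 1)
    rw [← hfib]
    calc ∑ r ∈ Finset.range 3, ∑ i ∈ (Finset.range k).filter (fun i => i % 3 = r),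
          (G.degree (p.getVert i) + 1)
        ≤ ∑ _r ∈ Finset.range 3, n := Finset.sum_le_sum fun r _ => hclass r
      _ = 3 * n := by simp [mul_comm]
  have hDsum : ∑ i ∈ Finset.range k, G.degree (p.getVert i) + k ≤ 3 * n := by
    have : ∑ i ∈ Finset.range k, (G.degree (p.getVert i) + 1)
        = ∑ i ∈ Finset.range k, G.degree (p.getVert i) + k := by
      rw [Finset.sum_add_distrib]; simp
    omega
  -- real-valued setup
  set z : ℕ → ℝ := fun i => if i < k - 1 then
      ((G.degree (p.getVert i) : ℝ) + (G.degree (p.getVert (i + 1)) : ℝ) + 1) else 1 with hz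
  have hznn : ∀ i ∈ Finset.range k, (0 : ℝ) ≤ z i := by
    intro i _
    simp only [hz]
    split <;> positivity
  have hk0 : (0 : ℝ) < (k : ℝ) := by exact_mod_cast (by omega : 0 < k)
  have hk1 : k - 1 + 1 = k := by omega
  -- sum of z is at most 6n
  have hsz : ∑ i ∈ Finset.range k, z i ≤ 6 * (n : ℝ) := by
    have hnat : (∑ i ∈ Finset.range (k - 1),
        (G.degree (p.getVert i) + G.degree (p.getVert (i + 1)) + 1)) + 1 ≤ 6 * n := by
      have hA : ∑ i ∈ Finset.range (k - 1), G.degree (p.getVert i)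
          ≤ ∑ i ∈ Finset.range k, G.degree (p.getVert i) :=
        Finset.sum_le_sum_of_subset (Finset.range_subset_range.mpr (by omega))
      have hB : ∑ i ∈ Finset.range (k - 1), G.degree (p.getVert (i + 1))
          ≤ ∑ i ∈ Finset.range k, G.degree (p.getVert i) := by
        conv_rhs => rw [← hk1]
        rw [Finset.sum_range_succ']
        omega
      have hsplit : (∑ i ∈ Finset.range (k - 1),
          (G.degree (p.getVert i) + G.degree (p.getVert (i + 1)) + 1))
          = (∑ i ∈ Finset.range (k - 1), G.degree (p.getVert i))
            + (∑ i ∈ Finset.range (k - 1), G.degree (p.getVert (i + 1))) + (k - 1) := by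
        rw [Finset.sum_add_distrib, Finset.sum_add_distrib]
        simp
      omega
    have hsum_eq : ∑ i ∈ Finset.range k, z i
        = (∑ i ∈ Finset.range (k - 1),
            ((G.degree (p.getVert i) : ℝ) + (G.degree (p.getVert (i + 1)) : ℝ) + 1)) + 1 := by
      conv_lhs => rw [← hk1, Finset.sum_range_succ]
      congr 1
      · exact Finset.sum_congr rfl fun i hi => by
          rw [hz]
          simp only [if_pos (Finset.mem_range.mp hi)]
      · rw [hz]; simp
    rw [hsum_eq]
    calc (∑ i ∈ Finset.range (k - 1),
            ((G.degree (p.getVert i) : ℝ) + (G.degree (p.getVert (i + 1)) : ℝ) + 1)) + 1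
        = (((∑ i ∈ Finset.range (k - 1),
            (G.degree (p.getVert i) + G.degree (p.getVert (i + 1)) + 1)) + 1 : ℕ) : ℝ) := by
          push_cast; ring
      _ ≤ ((6 * n : ℕ) : ℝ) := by exact_mod_cast hnat
      _ = 6 * (n : ℝ) := by push_cast; ring
  -- AM-GM
  have hamgm := Real.geom_mean_le_arith_mean_weighted (Finset.range k)
    (fun _ => (k : ℝ)⁻¹) z (fun i _ => by positivity) (by
      rw [Finset.sum_const, Finset.card_range, nsmul_eq_mul]
      field_simp) hznn
  have hPnn : (0 : ℝ) ≤ ∏ i ∈ Finset.range k, z i := Finset.prod_nonneg hznn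
  have hprod_rpow : (∏ i ∈ Finset.range k, z i) ^ ((k : ℝ)⁻¹)
      ≤ 6 * (n : ℝ) / (k : ℝ) := by
    rw [← Real.finset_prod_rpow _ _ hznn]
    calc ∏ i ∈ Finset.range k, z i ^ ((k : ℝ)⁻¹)
        ≤ ∑ i ∈ Finset.range k, (k : ℝ)⁻¹ * z i := hamgm
      _ = (k : ℝ)⁻¹ * ∑ i ∈ Finset.range k, z i := by rw [Finset.mul_sum]
      _ ≤ (k : ℝ)⁻¹ * (6 * (n : ℝ)) := by
          apply mul_le_mul_of_nonneg_left hsz (by positivity)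
      _ = 6 * (n : ℝ) / (k : ℝ) := by field_simp
  have hfinal : ∏ i ∈ Finset.range k, z i ≤ (6 * (n : ℝ) / (k : ℝ)) ^ k := by
    have := pow_le_pow_left₀ (Real.rpow_nonneg hPnn _) hprod_rpow k
    rwa [Real.rpow_inv_natCast_pow hPnn (by omega)] at this
  -- identify the goal product with the product of z
  have hprod_eq : (∏ i ∈ Finset.range (k - 1),
      ((G.degree (p.getVert i) : ℝ) + (G.degree (p.getVert (i + 1)) : ℝ) + 1))
      = ∏ i ∈ Finset.range k, z i := by
    conv_rhs => rw [← hk1, Finset.prod_range_succ]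
    rw [show z (k - 1) = 1 by rw [hz]; simp, mul_one]
    exact (Finset.prod_congr rfl fun i hi => by
      rw [hz]; simp only [if_pos (Finset.mem_range.mp hi)]).symm
  rw [hprod_eq]
  exact hfinal
end

section
/- Let m ≥ 3 be an integer and K a natural number with K ≥ (m − 2) · log 3 (natural logarithm). Let R : ℕ → ℝ be a sequence with R k ≥ 0 for all k ≤ K and R k ≤ ((m − 2)/m) · R (k − 1) for all 1 ≤ k ≤ K. Then (1/m) · ∑_{k=0}^{K−1} R k ≥ R K. -/
/-- Combined estimate in the DiffuseDominance analysis: if `K ≥ (m-2)·log 3` and the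
residue sequence `R` shrinks by a factor of at most `(m-2)/m` at each execution, then
the cutter's accumulated bonus `(1/m)·∑_{k=0}^{K-1} R k` is at least the final
residue value `R K`. -/
theorem cutter_becomes_dominant
    (m : ℕ) (hm : 3 ≤ m) (K : ℕ) (hK : ((m : ℝ) - 2) * Real.log 3 ≤ (K : ℝ))
    (R : ℕ → ℝ) (hR0 : ∀ k ≤ K, 0 ≤ R k)
    (hRstep : ∀ k, 1 ≤ k → k ≤ K → R k ≤ (((m : ℝ) - 2) / m) * R (k - 1)) :
    R K ≤ (1 / (m : ℝ)) * ∑ k ∈ Finset.range K, R k := by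
  set M : ℝ := (m : ℝ) with hM
  have hm3 : (3 : ℝ) ≤ M := by simp only [hM]; exact_mod_cast hm
  have hM0 : (0 : ℝ) < M := by linarith
  have hM2 : (0 : ℝ) < M - 2 := by linarith
  set q : ℝ := (M - 2) / M with hq
  set r : ℝ := M / (M - 2) with hr
  have hq0 : 0 ≤ q := by positivity
  have hr0 : 0 < r := by positivity
  have hr1 : 1 < r := by
    rw [hr, lt_div_iff₀ hM2]; linarith
  have hrq : r * q = 1 := by
    rw [hq, hr]; field_simp
  -- Step 1: R K ≤ q^j * R (K - j)
  have key : ∀ j, j ≤ K → R K ≤ q ^ j * R (K - j) := by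
    intro j hj
    induction j with
    | zero => simp
    | succ n ih =>
      have hn : n ≤ K := Nat.le_of_succ_le hj
      have h1 : 1 ≤ K - n := by omega
      have h2 : K - n ≤ K := Nat.sub_le _ _
      have hstep := hRstep (K - n) h1 h2
      have hiter : K - n - 1 = K - (n + 1) := by omega
      rw [hiter] at hstep
      calc R K ≤ q ^ n * R (K - n) := ih hn
        _ ≤ q ^ n * (q * R (K - (n + 1))) := by
            apply mul_le_mul_of_nonneg_left _ (pow_nonneg hq0 n)
            exact hstep
        _ = q ^ (n + 1) * R (K - (n + 1)) := by ring
  -- Hence r^(K-k) * R K ≤ R k for k < K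
  have key2 : ∀ k ∈ Finset.range K, r ^ (K - k) * R K ≤ R k := by
    intro k hk
    have hk' : k < K := Finset.mem_range.mp hk
    have h := key (K - k) (Nat.sub_le _ _)
    have hKk : K - (K - k) = k := by omega
    rw [hKk] at h
    have := mul_le_mul_of_nonneg_left h (le_of_lt (pow_pos hr0 (K - k)))
    calc r ^ (K - k) * R K ≤ r ^ (K - k) * (q ^ (K - k) * R k) := this
      _ = (r * q) ^ (K - k) * R k := by rw [mul_pow]; ring
      _ = R k := by rw [hrq]; simp
  -- Sum up
  have hsum : (∑ k ∈ Finset.range K, r ^ (K - k)) * R K ≤ ∑ k ∈ Finset.range K, R k := by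
    rw [Finset.sum_mul]
    exact Finset.sum_le_sum key2
  -- geometric sum value
  have hS : (∑ k ∈ Finset.range K, r ^ (K - k)) = (M / 2) * (r ^ K - 1) := by
    have h1 : (∑ k ∈ Finset.range K, r ^ (K - k)) = ∑ j ∈ Finset.range K, r ^ (j + 1) := by
      rw [← Finset.sum_range_reflect]
      apply Finset.sum_congr rfl
      intro i hi
      have : K - (K - 1 - i) = i + 1 := by
        have := Finset.mem_range.mp hi; omega
      rw [this]
    rw [h1]
    have h2 : (∑ j ∈ Finset.range K, r ^ (j + 1)) = r * ∑ j ∈ Finset.range K, r ^ j := by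
      rw [Finset.mul_sum]
      apply Finset.sum_congr rfl
      intro i _; ring
    have h3 : (∑ j ∈ Finset.range K, r ^ j) * (r - 1) = r ^ K - 1 := geom_sum_mul r K
    have hr1' : r - 1 ≠ 0 := by linarith
    have h4 : (∑ j ∈ Finset.range K, r ^ j) = (r ^ K - 1) / (r - 1) := by
      field_simp [h3]
      exact h3
    rw [h2, h4]
    have hrm : r - 1 = 2 / (M - 2) := by rw [hr]; field_simp; ring
    rw [hrm, hr]
    field_simp
  -- r ^ K ≥ 3
  have hlogr : 1 / (M - 2) ≤ Real.log r := by
    rw [Real.le_log_iff_exp_le hr0]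
    set t : ℝ := 1 / (M - 2) with ht
    have ht0 : 0 < t := by positivity
    have ht1 : t ≤ 1 := by
      rw [ht, div_le_one hM2]; linarith
    have hrt : r = 1 + 2 * t := by
      rw [hr, ht]; field_simp; ring
    have hconv := convexOn_exp.2 (Set.mem_univ (0:ℝ)) (Set.mem_univ (1:ℝ))
      (by linarith : (0:ℝ) ≤ 1 - t) (le_of_lt ht0) (by ring)
    simp only [smul_eq_mul, mul_zero, mul_one, zero_add, Real.exp_zero] at hconv
    have he : Real.exp 1 ≤ 3 := by
      have := Real.exp_one_lt_d9
      linarith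
    calc Real.exp t ≤ 1 - t + t * Real.exp 1 := hconv
      _ ≤ 1 - t + t * 3 := by nlinarith
      _ = 1 + 2 * t := by ring
      _ = r := hrt.symm
  have hrK : 3 ≤ r ^ K := by
    have hlog3 : 0 < Real.log 3 := Real.log_pos (by norm_num)
    have h1 : Real.log 3 ≤ (K : ℝ) * Real.log r := by
      calc Real.log 3 = ((M - 2) * Real.log 3) * (1 / (M - 2)) := by
            field_simp
        _ ≤ (K : ℝ) * Real.log r := by
            apply mul_le_mul hK hlogr (by positivity)
            positivity
    have h2 : Real.log 3 ≤ Real.log (r ^ K) := by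
      rw [Real.log_pow]; exact h1
    have := Real.exp_le_exp.mpr h2
    rwa [Real.exp_log (by norm_num : (0:ℝ) < 3), Real.exp_log (pow_pos hr0 K)] at this
  -- finish
  have hRK0 : 0 ≤ R K := hR0 K le_rfl
  have hSM : M ≤ (∑ k ∈ Finset.range K, r ^ (K - k)) := by
    rw [hS]; nlinarith
  have hfin : M * R K ≤ ∑ k ∈ Finset.range K, R k := by
    calc M * R K ≤ (∑ k ∈ Finset.range K, r ^ (K - k)) * R K := by
          exact mul_le_mul_of_nonneg_right hSM hRK0
      _ ≤ ∑ k ∈ Finset.range K, R k := hsum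
  rw [one_div, inv_mul_eq_div, le_div_iff₀ hM0]
  linarith [hfin]
end

section
/- Let c > 2 be a real number and T : ℕ → ℕ → ℝ a nonnegative function (T(n″, n′) bounds the number of queries to allocate n″ pieces among n′ agents, for n″ ≥ n′). Suppose that for all n′ ≥ 1 and n″ ≥ n′: (i) T(n″, n′) ≤ ∑_{i=1}^{n′−1} i · T(n′ − 1, n′ − i) + C(n′, 3) + n′(n′ − 3)/2 + n′·n″ + n′²·n″ (with C(n′,3) the binomial coefficient and the expression read in ℝ), and (ii) C(n′, 3) + n′(n′ − 3)/2 + n′·n″ + n′²·n″ ≤ (1 − 1/(c − 1)²) · c^{n′+n″}. Suppose moreover T(n″, 0) ≤ c^{n″} for all n″. Then T(n″, n′) ≤ c^{n′+n″} for all n″ ≥ n′ ≥ 0. -/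
private lemma geom_partial_bound (x : ℝ) (hx0 : 0 ≤ x) (hx1 : x < 1) (k : ℕ) :
    (∑ i ∈ Finset.Icc 1 k, (i : ℝ) * x ^ i) ≤ x / (1 - x) ^ 2 := by
  have h : HasSum (fun n : ℕ => (n : ℝ) * x ^ n) (x / (1 - x) ^ 2) :=
    hasSum_coe_mul_geometric_of_norm_lt_one (by rwa [Real.norm_eq_abs, abs_of_nonneg hx0])
  exact h.tsum_eq ▸ Summable.sum_le_tsum (Finset.Icc 1 k)
    (fun i _ => by positivity) h.summable

/-- Improved complexity bound for the Core Protocol (Lemma 3): any nonnegative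
solution `T` of the SubCore recurrence, whose polynomial part is dominated by
`(1 - 1/(c-1)²)·c^(n'+n'')`, satisfies `T(n'', n') ≤ c^(n'+n'')` for `n'' ≥ n'`. -/
theorem subcore_complexity_bound
    (c : ℝ) (hc : 2 < c) (T : ℕ → ℕ → ℝ)
    (hT0 : ∀ n'' n', 0 ≤ T n'' n')
    (hrec : ∀ n' n'', 1 ≤ n' → n' ≤ n'' →
      T n'' n' ≤ (∑ i ∈ Finset.Icc 1 (n' - 1), (i : ℝ) * T (n' - 1) (n' - i))
        + ((Nat.choose n' 3 : ℕ) : ℝ) + (n' : ℝ) * ((n' : ℝ) - 3) / 2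
        + (n' : ℝ) * (n'' : ℝ) + (n' : ℝ) ^ 2 * (n'' : ℝ))
    (hpoly : ∀ n' n'', 1 ≤ n' → n' ≤ n'' →
      ((Nat.choose n' 3 : ℕ) : ℝ) + (n' : ℝ) * ((n' : ℝ) - 3) / 2
        + (n' : ℝ) * (n'' : ℝ) + (n' : ℝ) ^ 2 * (n'' : ℝ)
        ≤ (1 - 1 / (c - 1) ^ 2) * c ^ (n' + n''))
    (hbase : ∀ n'', T n'' 0 ≤ c ^ n'') :
    ∀ n' n'' : ℕ, n' ≤ n'' → T n'' n' ≤ c ^ (n' + n'') := by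
  have hc0 : (0:ℝ) < c := by linarith
  have hc1 : (1:ℝ) < c := by linarith
  have hcm1 : (0:ℝ) < c - 1 := by linarith
  intro n'
  induction n' using Nat.strong_induction_on with
  | _ n' ih =>
    intro n'' hle
    match n' with
    | 0 => simpa using hbase n''
    | k + 1 =>
      have h1 := hrec (k+1) n'' (by omega) hle
      have h2 := hpoly (k+1) n'' (by omega) hle
      simp only [Nat.add_sub_cancel] at h1
      -- bound the sum term
      have hsum : (∑ i ∈ Finset.Icc 1 k, (i : ℝ) * T k (k + 1 - i))
          ≤ c ^ (k + 1 + n'') / (c - 1) ^ 2 := by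
        have step1 : (∑ i ∈ Finset.Icc 1 k, (i : ℝ) * T k (k + 1 - i))
            ≤ ∑ i ∈ Finset.Icc 1 k, (i : ℝ) * (c ^ (2*k+1) * (1/c) ^ i) := by
          apply Finset.sum_le_sum
          intro i hi
          have hi' := Finset.mem_Icc.mp hi
          have hTb : T k (k + 1 - i) ≤ c ^ ((k + 1 - i) + k) :=
            ih (k + 1 - i) (by omega) k (by omega)
          have hexp : c ^ ((k + 1 - i) + k) = c ^ (2*k+1) * (1/c) ^ i := by
            have hmul : c ^ ((k + 1 - i) + k) * c ^ i = c ^ (2*k+1) := by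
              rw [← pow_add]; congr 1; omega
            have hci : (c:ℝ) ^ i ≠ 0 := by positivity
            rw [← hmul, one_div, inv_pow, mul_assoc, mul_inv_cancel₀ hci, mul_one]
          calc (i : ℝ) * T k (k + 1 - i) ≤ (i:ℝ) * c ^ ((k + 1 - i) + k) := by
                apply mul_le_mul_of_nonneg_left hTb (by positivity)
            _ = (i : ℝ) * (c ^ (2*k+1) * (1/c) ^ i) := by rw [hexp]
        have step2 : (∑ i ∈ Finset.Icc 1 k, (i : ℝ) * (c ^ (2*k+1) * (1/c) ^ i))
            = c ^ (2*k+1) * ∑ i ∈ Finset.Icc 1 k, (i : ℝ) * (1/c) ^ i := by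
          rw [Finset.mul_sum]; apply Finset.sum_congr rfl; intro i _; ring
        have hx1 : (1/c : ℝ) < 1 := by
          rw [div_lt_one hc0]; linarith
        have step3 := geom_partial_bound (1/c) (by positivity) hx1 k
        have hval : (1/c) / (1 - 1/c) ^ 2 = c / (c-1)^2 := by
          field_simp
        calc (∑ i ∈ Finset.Icc 1 k, (i : ℝ) * T k (k + 1 - i))
            ≤ c ^ (2*k+1) * ∑ i ∈ Finset.Icc 1 k, (i : ℝ) * (1/c) ^ i := by
              rw [← step2]; exact step1
          _ ≤ c ^ (2*k+1) * (c / (c-1)^2) := by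
              apply mul_le_mul_of_nonneg_left _ (by positivity)
              rw [← hval]; exact step3
          _ = c ^ (2*k+2) / (c-1)^2 := by rw [pow_succ]; ring
          _ ≤ c ^ (k + 1 + n'') / (c - 1) ^ 2 := by
              apply div_le_div_of_nonneg_right _ (by positivity)
              exact pow_le_pow_right₀ (le_of_lt hc1) (by omega)
      have key : T n'' (k+1) ≤ c ^ (k + 1 + n'') / (c - 1) ^ 2
          + (1 - 1 / (c - 1) ^ 2) * c ^ (k + 1 + n'') := by linarith
      have : c ^ (k + 1 + n'') / (c - 1) ^ 2
          + (1 - 1 / (c - 1) ^ 2) * c ^ (k + 1 + n'') = c ^ (k + 1 + n'') := by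
        field_simp
        ring
      linarith
end
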